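/- arXiv:0706.2175 — 4 statements merged into one kernel-verified Lean document; each statement's English description precedes it below -/
import Mathlib

section
/- Let G be a finitely generated pro-p group and f: M → N a morphism of complete Z_p[[G]]-modules. If Tor_q^{Z_p[[G]]}(F_p, f) is an isomorphism for q = 0 and surjective for q = 1, then f is an isomorphism. -/
/-!
Surjectivity modulo `I` lifts by successive approximation: `Iⁿ N ⊆ f (Iⁿ M) + Iⁿ⁺¹ N` for every
`n`, the corrections converge in the precomplete module `M`, and the Hausdorff module `N`
identifies the limit as a preimage.

Once `f` is surjective, a chase through the canonical presentations `0 → K_X → A^{(X)} → X → 0`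
turns injectivity of `Tor₀(f)` and surjectivity of `Tor₁(f)` into `ker f ⊆ I • ker f`: a lift of
`x ∈ ker f` to `I A^{(M)}` is corrected by a syzygy so that its image lies in `I K_N`, and a
section of the surjection `A^{(M)} → A^{(N)}` splits it into two pieces that land in
`I • ker f`. Hence `ker f ⊆ Iⁿ M` for all `n`, so `ker f = 0` as `M` is Hausdorff.
-/

noncomputable section

variable (p : ℕ) [Fact p.Prime]
variable (G : Type) [Group G] [TopologicalSpace G] [IsTopologicalGroup G]
  [CompactSpace G] [TotallyDisconnectedSpace G]

/-- The component ring `Z/p^{n+1}[G/N]` of the completed group ring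
`Z_p[[G]] = lim_{U,n} Z_p/(p^n)[G/U]`. -/
abbrev CGRComponent (n : ℕ) (N : OpenNormalSubgroup G) : Type :=
  MonoidAlgebra (ZMod (p ^ (n + 1))) (G ⧸ (N : Subgroup G))

/-- The transition ring homomorphisms of the inverse system defining `Z_p[[G]]`. -/
def CGRtransition {n m : ℕ} (h : n ≤ m) {N M : OpenNormalSubgroup G}
    (hNM : (M : Subgroup G) ≤ (N : Subgroup G)) :
    CGRComponent p G m M →+* CGRComponent p G n N :=
  MonoidAlgebra.liftNCRingHom
    (MonoidAlgebra.singleOneRingHom.comp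
      (ZMod.castHom (pow_dvd_pow p (by omega : n + 1 ≤ m + 1)) (ZMod (p ^ (n + 1)))))
    ((MonoidAlgebra.of (ZMod (p ^ (n + 1))) (G ⧸ (N : Subgroup G))).comp
      (QuotientGroup.map (M : Subgroup G) (N : Subgroup G) (MonoidHom.id G) hNM))
    (fun _ _ => by
      show Commute (MonoidAlgebra.single 1 _) (MonoidAlgebra.single _ 1)
      unfold Commute SemiconjBy
      rw [MonoidAlgebra.single_mul_single, MonoidAlgebra.single_mul_single]
      simp)

/-- The completed group ring `Z_p[[G]] = lim_{U,n} Z_p/(p^n)[G/U]` of a profinite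
group `G`, realized as the subring of compatible families in the product of the
component rings `Z/p^{n+1}[G/N]`, `N` running over the open normal subgroups. -/
def CompletedGroupRing :
    Subring (∀ (n : ℕ) (N : OpenNormalSubgroup G), CGRComponent p G n N) where
  carrier := {x | ∀ (n m : ℕ) (h : n ≤ m) (N M : OpenNormalSubgroup G)
    (hNM : (M : Subgroup G) ≤ (N : Subgroup G)),
      CGRtransition p G h hNM (x m M) = x n N}
  mul_mem' := fun hx hy n m h N M hNM => by
    simp only [Pi.mul_apply, map_mul, hx n m h N M hNM, hy n m h N M hNM]
  one_mem' := fun n m h N M hNM => by simp only [Pi.one_apply, map_one]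
  add_mem' := fun hx hy n m h N M hNM => by
    simp only [Pi.add_apply, map_add, hx n m h N M hNM, hy n m h N M hNM]
  zero_mem' := fun n m h N M hNM => by simp only [Pi.zero_apply, map_zero]
  neg_mem' := fun hx n m h N M hNM => by
    simp only [Pi.neg_apply, map_neg, hx n m h N M hNM]

/-- The top open normal subgroup. -/
def topONS : OpenNormalSubgroup G :=
  { toOpenSubgroup := (⊤ : OpenSubgroup G),
    isNormal' := inferInstanceAs (⊤ : Subgroup G).Normal }

/-- The augmentation of a monoid algebra. -/
def monoidAlgebraAug (R H : Type*) [CommRing R] [Monoid H] :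
    MonoidAlgebra R H →+* R :=
  MonoidAlgebra.liftNCRingHom (RingHom.id R) 1 (fun _ _ => Commute.all _ _)

/-- The augmentation `Z_p[[G]] → F_p`. -/
def CGRaugmentation : ↥(CompletedGroupRing p G) →+* ZMod p :=
  (ZMod.castHom (dvd_pow_self p one_ne_zero) (ZMod p)).comp
    ((monoidAlgebraAug (ZMod (p ^ (0 + 1))) (G ⧸ ((topONS G : OpenNormalSubgroup G) : Subgroup G))).comp
      ((Pi.evalRingHom (fun N : OpenNormalSubgroup G => CGRComponent p G 0 N)
          (topONS G)).comp
        ((Pi.evalRingHom (fun n => ∀ N : OpenNormalSubgroup G, CGRComponent p G n N)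
            0).comp (CompletedGroupRing p G).subtype)))

/-- The augmentation ideal `I = ker(Z_p[[G]] → F_p)`. -/
def augIdeal : Ideal ↥(CompletedGroupRing p G) :=
  RingHom.ker (CGRaugmentation p G)

/-- Iterated action of an ideal on a module: `smulPow I M n` is `IⁿM`. -/
def smulPow {A : Type*} [Ring A] (I : Ideal A) (M : Type*) [AddCommGroup M]
    [Module A M] : ℕ → Submodule A M
  | 0 => ⊤
  | (n + 1) => Submodule.span A {x : M | ∃ a ∈ I, ∃ m ∈ smulPow I M n, x = a • m}

/-- A module `M` over `A` is `I`-adically complete if the natural map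
`M → lim_n M/IⁿM` is an isomorphism, i.e. `M` is Hausdorff and precomplete for the
`I`-adic filtration. -/
def IsCompleteMod {A : Type*} [Ring A] (I : Ideal A) (M : Type*) [AddCommGroup M]
    [Module A M] : Prop :=
  (∀ x : M, (∀ n, x ∈ smulPow I M n) → x = 0) ∧
    (∀ f : ℕ → M, (∀ n, f (n + 1) - f n ∈ smulPow I M n) →
      ∃ L : M, ∀ n, L - f n ∈ smulPow I M n)

/-- `G` is a pro-`p` group: every (open normal) finite quotient has `p`-power order. -/
def IsProP : Prop :=
  ∀ N : OpenNormalSubgroup G, ∃ k : ℕ, Nat.card (G ⧸ (N : Subgroup G)) = p ^ k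

/-- `G` is topologically finitely generated. -/
def IsTopFG : Prop :=
  ∃ S : Finset G, Dense ((Subgroup.closure (S : Set G) : Subgroup G) : Set G)

end

noncomputable section

namespace TorSetup

variable {A : Type*} [Ring A] (I : Ideal A)

/-- `F_p ⊗_A X`, i.e. `X/IX`, where `F_p = A/I` is viewed as a right `A`-module via the
augmentation with kernel `I`. -/
abbrev TorZeroObj (X : Type*) [AddCommGroup X] [Module A X] :=
  X ⧸ smulPow I X 1

lemma smulPow_one_le_comap {X Y : Type*} [AddCommGroup X] [Module A X]
    [AddCommGroup Y] [Module A Y] (f : X →ₗ[A] Y) :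
    smulPow I X 1 ≤ (smulPow I Y 1).comap f := by
  show Submodule.span A _ ≤ _
  rw [Submodule.span_le]
  rintro x ⟨a, ha, m, -, rfl⟩
  rw [SetLike.mem_coe, Submodule.mem_comap, map_smul]
  exact Submodule.subset_span ⟨a, ha, f m, Submodule.mem_top, rfl⟩

/-- The map `Tor₀(F_p, f) = F_p ⊗ f : X/IX → Y/IY` induced by `f`. -/
def torZeroMap {X Y : Type*} [AddCommGroup X] [Module A X] [AddCommGroup Y]
    [Module A Y] (f : X →ₗ[A] Y) : TorZeroObj I X →ₗ[A] TorZeroObj I Y :=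
  Submodule.mapQ _ _ f (smulPow_one_le_comap I f)

/-- The canonical free cover `A^{(X)} → X`. -/
def freeCover (X : Type*) [AddCommGroup X] [Module A X] : (X →₀ A) →ₗ[A] X :=
  Finsupp.linearCombination A (id : X → X)

/-- The canonical syzygy module `K_X = ker(A^{(X)} → X)`. -/
def syzygy (X : Type*) [AddCommGroup X] [Module A X] : Submodule A (X →₀ A) :=
  LinearMap.ker (freeCover X)

/-- Functoriality of the canonical free cover. -/
def freeMap {X Y : Type*} [AddCommGroup X] [Module A X] [AddCommGroup Y]
    [Module A Y] (f : X →ₗ[A] Y) : (X →₀ A) →ₗ[A] (Y →₀ A) :=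
  Finsupp.lmapDomain A A ⇑f

lemma freeMap_syzygy {X Y : Type*} [AddCommGroup X] [Module A X] [AddCommGroup Y]
    [Module A Y] (f : X →ₗ[A] Y) :
    ∀ x ∈ syzygy X, freeMap f x ∈ syzygy Y := by
  intro x hx
  have hcomp := Finsupp.lmapDomain_linearCombination (R := A) (v := (id : X → X))
    (v' := (id : Y → Y)) ⇑f f (fun i => rfl)
  have : freeCover Y (freeMap f x) = f (freeCover X x) := by
    have := congrArg (fun g => g x) hcomp
    simpa [freeCover, freeMap] using this
  simp only [syzygy, LinearMap.mem_ker] at hx ⊢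
  rw [this, hx, map_zero]

/-- The induced map of syzygies. -/
def syzygyMap {X Y : Type*} [AddCommGroup X] [Module A X] [AddCommGroup Y]
    [Module A Y] (f : X →ₗ[A] Y) :
    ↥(syzygy (A := A) X) →ₗ[A] ↥(syzygy (A := A) Y) :=
  (freeMap f).restrict (freeMap_syzygy f)

/-- The comparison map `K_X/IK_X → A^{(X)}/I·A^{(X)}` whose kernel is
`Tor₁(F_p, X)` (computed from the canonical presentation
`0 → K_X → A^{(X)} → X → 0`, using that `A^{(X)}` is free). -/
def torOneCompare (X : Type*) [AddCommGroup X] [Module A X] :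
    TorZeroObj I ↥(syzygy (A := A) X) →ₗ[A] TorZeroObj I (X →₀ A) :=
  torZeroMap I (syzygy (A := A) X).subtype

/-- `Tor₁^A(F_p, X) = ker(K_X/IK_X → A^{(X)}/I·A^{(X)})`. -/
def torOne (X : Type*) [AddCommGroup X] [Module A X] :
    Submodule A (TorZeroObj I ↥(syzygy (A := A) X)) :=
  LinearMap.ker (torOneCompare I X)

/-- The map `Tor₁(F_p, f)` induced by `f : X → Y`. -/
def torOneMap {X Y : Type*} [AddCommGroup X] [Module A X] [AddCommGroup Y]
    [Module A Y] (f : X →ₗ[A] Y) : ↥(torOne I X) →ₗ[A] ↥(torOne I Y) :=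
  (torZeroMap I (syzygyMap f)).restrict
    (by
      intro x hx
      obtain ⟨k, rfl⟩ := Submodule.Quotient.mk_surjective _ x
      simp only [torOne, LinearMap.mem_ker, torOneCompare, torZeroMap,
        Submodule.mapQ_apply] at hx ⊢
      rw [Submodule.Quotient.mk_eq_zero] at hx ⊢
      have hval : ((syzygy (A := A) Y).subtype) (syzygyMap f k)
          = freeMap f ((syzygy (A := A) X).subtype k) := rfl
      rw [hval]
      exact smulPow_one_le_comap I (freeMap f) hx)

end TorSetup

open TorSetup

section SmulPow

variable {A : Type*} [Ring A] (I : Ideal A)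
variable {M N : Type*} [AddCommGroup M] [Module A M] [AddCommGroup N] [Module A N]

theorem smulPow_succ_eq_smul (n : ℕ) : smulPow I M (n + 1) = I • smulPow I M n := by
  refine le_antisymm (Submodule.span_le.mpr ?_) (Submodule.smul_le.mpr ?_)
  · rintro _ ⟨a, ha, m, hm, rfl⟩
    exact Submodule.smul_mem_smul ha hm
  · intro a ha m hm
    exact Submodule.subset_span ⟨a, ha, m, hm, rfl⟩

theorem map_smulPow_le (f : M →ₗ[A] N) (n : ℕ) :
    (smulPow I M n).map f ≤ smulPow I N n := by
  induction n with
  | zero => exact le_top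
  | succ n ih =>
    rw [smulPow_succ_eq_smul, smulPow_succ_eq_smul, Submodule.map_smul'']
    exact Submodule.smul_mono le_rfl ih

theorem map_smulPow_of_surjective {f : M →ₗ[A] N} (hf : Function.Surjective f) (n : ℕ) :
    (smulPow I M n).map f = smulPow I N n := by
  induction n with
  | zero => exact Submodule.map_top f ▸ LinearMap.range_eq_top.mpr hf
  | succ n ih => rw [smulPow_succ_eq_smul, smulPow_succ_eq_smul, Submodule.map_smul'', ih]

end SmulPow

-- `IsCompleteMod I M` is, by definition, `IsAdicHausdorff I M ∧ IsAdicPrecomplete I M`.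
def IsAdicHausdorff {A : Type*} [Ring A] (I : Ideal A) (M : Type*) [AddCommGroup M]
    [Module A M] : Prop :=
  ∀ x : M, (∀ n, x ∈ smulPow I M n) → x = 0

def IsAdicPrecomplete {A : Type*} [Ring A] (I : Ideal A) (M : Type*) [AddCommGroup M]
    [Module A M] : Prop :=
  ∀ g : ℕ → M, (∀ n, g (n + 1) - g n ∈ smulPow I M n) → ∃ L : M, ∀ n, L - g n ∈ smulPow I M n

section Surjective

variable {A : Type*} [Ring A] {I : Ideal A}
variable {M N : Type*} [AddCommGroup M] [Module A M] [AddCommGroup N] [Module A N]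
variable {f : M →ₗ[A] N}

theorem range_sup_smulPow_one_eq_top (hf : Function.Surjective (torZeroMap I f)) :
    LinearMap.range f ⊔ smulPow I N 1 = ⊤ := by
  refine eq_top_iff.mpr fun y _ => ?_
  obtain ⟨c, hc⟩ := hf (Submodule.Quotient.mk y)
  obtain ⟨x, rfl⟩ := Submodule.Quotient.mk_surjective _ c
  have hxy : f x - y ∈ smulPow I N 1 := (Submodule.Quotient.eq _).mp hc
  exact Submodule.mem_sup.mpr
    ⟨f x, LinearMap.mem_range_self f x, y - f x, by simpa using neg_mem hxy, by abel⟩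

theorem smulPow_le_map_sup_smulPow_succ (hf : LinearMap.range f ⊔ smulPow I N 1 = ⊤) (n : ℕ) :
    smulPow I N n ≤ (smulPow I M n).map f ⊔ smulPow I N (n + 1) := by
  induction n with
  | zero => simpa [smulPow, Submodule.map_top] using hf.ge
  | succ n ih =>
    calc smulPow I N (n + 1) = I • smulPow I N n := smulPow_succ_eq_smul I n
      _ ≤ I • ((smulPow I M n).map f ⊔ smulPow I N (n + 1)) := Submodule.smul_mono le_rfl ih
      _ = (smulPow I M (n + 1)).map f ⊔ smulPow I N (n + 1 + 1) := by
        rw [Submodule.smul_sup, ← Submodule.map_smul'', ← smulPow_succ_eq_smul I n,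
          ← smulPow_succ_eq_smul I (n + 1)]

theorem surjective_of_range_sup_smulPow_one_eq_top (hM : IsAdicPrecomplete I M)
    (hN : IsAdicHausdorff I N) (hf : LinearMap.range f ⊔ smulPow I N 1 = ⊤) :
    Function.Surjective f := by
  have step : ∀ n z, ∃ x, z ∈ smulPow I N n →
      x ∈ smulPow I M n ∧ z - f x ∈ smulPow I N (n + 1) := by
    intro n z
    by_cases hz : z ∈ smulPow I N n
    · obtain ⟨_, ⟨x, hx, rfl⟩, w, hw, hxw⟩ :=
        Submodule.mem_sup.mp (smulPow_le_map_sup_smulPow_succ hf n hz)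
      exact ⟨x, fun _ => ⟨hx, by rwa [← hxw, add_sub_cancel_left]⟩⟩
    · exact ⟨0, fun h => absurd h hz⟩
  choose c hc using step
  intro y
  let g : ℕ → M := fun n => Nat.rec 0 (fun n x => x + c n (y - f x)) n
  have hg : ∀ n, y - f (g n) ∈ smulPow I N n := by
    intro n
    induction n with
    | zero => exact Submodule.mem_top
    | succ n ih => simpa [g, sub_add_eq_sub_sub] using (hc n _ ih).2
  obtain ⟨L, hL⟩ := hM g fun n => by simpa [g] using (hc n _ (hg n)).1
  refine ⟨L, (sub_eq_zero.mp (hN _ fun n => ?_)).symm⟩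
  rw [show y - f L = (y - f (g n)) - f (L - g n) by rw [map_sub]; abel]
  exact sub_mem (hg n) (map_smulPow_le I f n ⟨_, hL n, rfl⟩)

end Surjective

namespace TorSetup

variable {A : Type*} [Ring A] {I : Ideal A}
variable {M N : Type*} [AddCommGroup M] [Module A M] [AddCommGroup N] [Module A N]

theorem freeCover_surjective : Function.Surjective (freeCover (A := A) M) :=
  Finsupp.linearCombination_surjective A Function.surjective_id

theorem freeCover_freeMap (f : M →ₗ[A] N) (u : M →₀ A) :
    freeCover N (freeMap f u) = f (freeCover M u) :=
  LinearMap.congr_fun (Finsupp.lmapDomain_linearCombination (R := A) (v := id) (v' := id)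
    f f fun _ => rfl) u

theorem mk_mem_torOne_iff (k : syzygy (A := A) M) :
    (Submodule.Quotient.mk k : TorZeroObj I (syzygy (A := A) M)) ∈ torOne I M ↔
      (k : M →₀ A) ∈ smulPow I (M →₀ A) 1 := by
  simp only [torOne, LinearMap.mem_ker, torOneCompare, torZeroMap, Submodule.mapQ_apply,
    Submodule.Quotient.mk_eq_zero]
  rfl

variable {f : M →ₗ[A] N}

theorem exists_syzygy_of_surjective_torOneMap (h1 : Function.Surjective (torOneMap I f))
    (w : syzygy (A := A) N) (hw : (w : N →₀ A) ∈ smulPow I (N →₀ A) 1) :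
    ∃ s : syzygy (A := A) M, (s : M →₀ A) ∈ smulPow I (M →₀ A) 1 ∧
      w - syzygyMap f s ∈ smulPow I (syzygy (A := A) N) 1 := by
  obtain ⟨⟨d, hd⟩, hdw⟩ := h1 ⟨_, (mk_mem_torOne_iff w).mpr hw⟩
  obtain ⟨s, rfl⟩ := Submodule.Quotient.mk_surjective _ d
  exact ⟨s, (mk_mem_torOne_iff s).mp hd,
    (Submodule.Quotient.eq _).mp (congrArg Subtype.val hdw).symm⟩

theorem ker_le_smulPow_one (h0 : Function.Injective (torZeroMap I f)) :
    LinearMap.ker f ≤ smulPow I M 1 := by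
  intro x hx
  rw [← Submodule.Quotient.mk_eq_zero]
  apply h0
  rw [map_zero, torZeroMap, Submodule.mapQ_apply, LinearMap.mem_ker.mp hx,
    Submodule.Quotient.mk_zero]

theorem map_smulPow_one_le_smul_ker {X : Type*} [AddCommGroup X] [Module A X]
    (g : X →ₗ[A] M) (hg : f ∘ₗ g = 0) :
    (smulPow I X 1).map g ≤ I • LinearMap.ker f := by
  rw [smulPow_succ_eq_smul, Submodule.map_smul'']
  refine Submodule.smul_mono le_rfl ?_
  rintro _ ⟨x, -, rfl⟩
  exact LinearMap.congr_fun hg x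

theorem ker_le_smul_ker (h0 : Function.Injective (torZeroMap I f))
    (h1 : Function.Surjective (torOneMap I f)) (hf : Function.Surjective f) :
    LinearMap.ker f ≤ I • LinearMap.ker f := by
  obtain ⟨σ, hσ⟩ := (freeMap f).exists_rightInverse_of_surjective
    (LinearMap.range_eq_top.mpr (Finsupp.mapDomain_surjective hf))
  have hσ' : ∀ v, freeMap f (σ v) = v := LinearMap.congr_fun hσ
  intro x hx
  have hx1 := ker_le_smulPow_one h0 hx
  rw [← map_smulPow_of_surjective I freeCover_surjective 1] at hx1
  obtain ⟨t, ht, rfl⟩ := hx1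
  have hft : freeMap f t ∈ syzygy (A := A) N := by
    rwa [syzygy, LinearMap.mem_ker, freeCover_freeMap]
  obtain ⟨s, hs, hsw⟩ := exists_syzygy_of_surjective_torOneMap h1 ⟨_, hft⟩
    (map_smulPow_le I (freeMap f) 1 ⟨t, ht, rfl⟩)
  set r : syzygy (A := A) N := ⟨freeMap f t, hft⟩ - syzygyMap f s
  have hts : freeMap f (t - s) = r := by simp [r, syzygyMap]
  let π : (M →₀ A) →ₗ[A] M →₀ A := LinearMap.id - σ ∘ₗ freeMap f
  have hsplit : freeCover M t = freeCover M (π (t - s)) + freeCover M (σ r) := by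
    have hs0 : freeCover M (s : M →₀ A) = 0 := s.2
    simp only [π, LinearMap.sub_apply, LinearMap.id_apply, LinearMap.comp_apply, hts]
    rw [← map_add, sub_add_cancel, map_sub, hs0, sub_zero]
  rw [hsplit]
  refine add_mem
    (map_smulPow_one_le_smul_ker (freeCover M ∘ₗ π) ?_ ⟨t - s, sub_mem ht hs, rfl⟩)
    (map_smulPow_one_le_smul_ker (freeCover M ∘ₗ σ ∘ₗ (syzygy (A := A) N).subtype) ?_
      ⟨r, hsw, rfl⟩)
  · refine LinearMap.ext fun u => ?_
    change f (freeCover M (u - σ (freeMap f u))) = 0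
    rw [← freeCover_freeMap, map_sub, hσ', sub_self, map_zero]
  · refine LinearMap.ext fun k => ?_
    change f (freeCover M (σ k)) = 0
    rw [← freeCover_freeMap, hσ']
    exact k.2

theorem ker_le_smulPow (h0 : Function.Injective (torZeroMap I f))
    (h1 : Function.Surjective (torOneMap I f)) (hf : Function.Surjective f) :
    ∀ n, LinearMap.ker f ≤ smulPow I M n
  | 0 => le_top
  | n + 1 => by
    rw [smulPow_succ_eq_smul]
    exact (ker_le_smul_ker h0 h1 hf).trans
      (Submodule.smul_mono le_rfl (ker_le_smulPow h0 h1 hf n))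

theorem injective_of_torZeroMap_torOneMap (hM : IsAdicHausdorff I M)
    (h0 : Function.Injective (torZeroMap I f)) (h1 : Function.Surjective (torOneMap I f))
    (hf : Function.Surjective f) : Function.Injective f := by
  rw [← LinearMap.ker_eq_bot, eq_bot_iff]
  exact fun x hx => hM x fun n => ker_le_smulPow h0 h1 hf n hx

end TorSetup

theorem complete_iso_of_tor_conditions_general
    (p : ℕ) [Fact p.Prime]
    (G : Type) [Group G] [TopologicalSpace G]
    (M N : Type) [AddCommGroup M] [Module ↥(CompletedGroupRing p G) M]
    [AddCommGroup N] [Module ↥(CompletedGroupRing p G) N]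
    (hM : IsCompleteMod (augIdeal p G) M) (hN : IsCompleteMod (augIdeal p G) N)
    (f : M →ₗ[↥(CompletedGroupRing p G)] N)
    (h0 : Function.Bijective (torZeroMap (augIdeal p G) f))
    (h1 : Function.Surjective (torOneMap (augIdeal p G) f)) :
    Function.Bijective f := by
  have hf : Function.Surjective f :=
    surjective_of_range_sup_smulPow_one_eq_top hM.2 hN.1 (range_sup_smulPow_one_eq_top h0.2)
  exact ⟨injective_of_torZeroMap_torOneMap hM.1 h0.1 h1 hf, hf⟩

/-- Lemma 4.3, isomorphism: let `G` be a finitely generated pro-`p` group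
and `f : M → N` a morphism of complete `Z_p[[G]]`-modules.  If
`Tor_q^{Z_p[[G]]}(F_p, f)` is an isomorphism for `q = 0` and surjective for `q = 1`,
then `f` is an isomorphism. -/
theorem complete_iso_of_tor_conditions
    (p : ℕ) [Fact p.Prime]
    (G : Type) [Group G] [TopologicalSpace G] [IsTopologicalGroup G]
    [CompactSpace G] [TotallyDisconnectedSpace G]
    (hpro : IsProP p G) (hfg : IsTopFG G)
    (M N : Type) [AddCommGroup M] [Module ↥(CompletedGroupRing p G) M]
    [AddCommGroup N] [Module ↥(CompletedGroupRing p G) N]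
    (hM : IsCompleteMod (augIdeal p G) M) (hN : IsCompleteMod (augIdeal p G) N)
    (f : M →ₗ[↥(CompletedGroupRing p G)] N)
    (h0 : Function.Bijective (torZeroMap (augIdeal p G) f))
    (h1 : Function.Surjective (torOneMap (augIdeal p G) f)) :
    Function.Bijective f :=
  complete_iso_of_tor_conditions_general p G M N hM hN f h0 h1

end
end

section
/- Let W = W(F_9) be the Witt vectors of the field with 9 elements, viewed inside the ring O_2 obtained from W by adjoining a noncommuting element S with relations Sa = φ(a)S for a ∈ W (φ the Frobenius) and S² = 3. Let ω ∈ W be a Teichmüller lift of a primitive eighth root of unity and set s = -(1/2)(1 + ωS). Then s³ = 1 and s ≠ 1, i.e., s has order exactly 3 in the unit group of O_2. -/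
/-! Write `ω` for the Teichmüller lift of `x`. The Frobenius cubes Teichmüller lifts and
`x⁴ = -1` since `x` has order `8`, so `ω φ(ω) = ω⁴ = -1` and `(ωS)² = ω φ(ω) S² = -3`. Hence
`(1 + ωS)² = -2 + 2ωS` and `(1 + ωS)³ = -8`, so `s³ = (-1/2)³ · (-8) = 1`; and `s ≠ 1` since
`-1/2 ≠ 1` when `3 ≠ 0` in `W`. -/

noncomputable section

open WittVector

instance : Fact (Nat.Prime 3) := ⟨by norm_num⟩

/-- `W = W(F₉)`, the Witt vectors of the field with nine elements. -/
abbrev W : Type := WittVector 3 (GaloisField 3 2)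

/-- The Frobenius `φ` of `W(F₉)`. -/
abbrev φ : W →+* W := WittVector.frobenius

/-- The ring `O₂ = W⟨S⟩/(Sa - φ(a)S, S² - 3)`, realized faithfully as the subring of
`2 × 2` matrices over `W` consisting of the matrices `!![a, 3b; φ(b), φ(a)]`
(where `a + bS` corresponds to this matrix, and `S` to `!![0, 3; 1, 0]`). -/
def elt (a b : W) : Matrix (Fin 2) (Fin 2) W := !![a, 3 * b; φ b, φ a]

/-- `O₂` as a subring of the `2 × 2` matrices over `W`: the subring generated by the
(diagonally embedded) Witt vectors together with the element `S`. -/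
def O₂ : Subring (Matrix (Fin 2) (Fin 2) W) :=
  Subring.closure ((Set.range fun a : W => elt a 0) ∪ {elt 0 1})

/-- The element `s = -(1/2)(1 + ωS)`, where `ω` is the Teichmüller lift of a primitive
eighth root of unity `x ∈ F₉` and `half` is the inverse of `2` in `W`. -/
def sElt (x : GaloisField 3 2) (half : W) : Matrix (Fin 2) (Fin 2) W :=
  (-half) • (1 + elt 0 (teichmuller 3 x))

theorem GaloisField.pow_prime_pow {p n : ℕ} [Fact p.Prime] (hn : n ≠ 0) (x : GaloisField p n) :
    x ^ p ^ n = x := by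
  have := Fintype.ofFinite (GaloisField p n)
  rw [← GaloisField.card p n hn, Nat.card_eq_fintype_card, FiniteField.pow_card]

theorem WittVector.frobenius_frobenius_galoisField {p : ℕ} [Fact p.Prime]
    (a : WittVector p (GaloisField p 2)) : frobenius (frobenius a) = a := by
  ext n
  simp only [frobenius_eq_map_frobenius, map_coeff, frobenius_def, ← pow_mul, ← sq,
    GaloisField.pow_prime_pow two_ne_zero]

theorem WittVector.frobenius_teichmuller {p : ℕ} [Fact p.Prime] {R : Type*} [CommRing R]
    [CharP R p] (x : R) : frobenius (teichmuller p x) = teichmuller p (x ^ p) := by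
  rw [frobenius_eq_map_frobenius, map_teichmuller, frobenius_def]

theorem WittVector.teichmuller_neg_one {p : ℕ} [Fact p.Prime] {R : Type*} [CommRing R]
    [IsDomain R] [CharP R p] (hp : p ≠ 2) : teichmuller p (-1 : R) = -1 := by
  have hR : ringChar R ≠ 2 := by rwa [ringChar.eq R p]
  have hsq : teichmuller p (-1 : R) * teichmuller p (-1) = 1 := by
    rw [← map_mul, neg_one_mul, neg_neg, map_one]
  refine (mul_self_eq_one_iff.mp hsq).resolve_left fun h ↦ ?_
  have := congrArg (coeff · 0) h
  simp only [teichmuller_coeff_zero, one_coeff_zero] at this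
  exact Ring.neg_one_ne_one_of_char_ne_two hR this

theorem pow_eq_neg_one_of_orderOf_eq_two_mul {R : Type*} [CommRing R] [IsDomain R] {x : R}
    {n : ℕ} (hx : orderOf x = 2 * n) (hn : n ≠ 0) : x ^ n = -1 := by
  have := (hx ▸ IsPrimitiveRoot.orderOf x).pow_of_dvd hn (dvd_mul_left n 2)
  rw [Nat.mul_div_cancel _ (Nat.pos_of_ne_zero hn)] at this
  exact this.eq_neg_one_of_two_right

theorem teichmuller_mul_frobenius_teichmuller {x : GaloisField 3 2} (hx : orderOf x = 8) :
    teichmuller 3 x * φ (teichmuller 3 x) = -1 := by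
  rw [frobenius_teichmuller, ← map_mul, show x * x ^ 3 = x ^ 4 by ring,
    pow_eq_neg_one_of_orderOf_eq_two_mul (n := 4) hx (by norm_num),
    teichmuller_neg_one (by norm_num)]

theorem elt_add (a b c d : W) : elt a b + elt c d = elt (a + c) (b + d) := by
  refine Matrix.ext fun i j ↦ ?_
  fin_cases i <;> fin_cases j <;> simp [elt, mul_add]

theorem elt_mul (a b c d : W) :
    elt a b * elt c d = elt (a * c + 3 * b * φ d) (a * d + b * φ c) := by
  refine Matrix.ext fun i j ↦ ?_
  fin_cases i <;> fin_cases j <;>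
    simp [elt, Matrix.mul_apply, frobenius_frobenius_galoisField, map_ofNat] <;> ring

theorem elt_one_zero : elt 1 0 = 1 := by
  refine Matrix.ext fun i j ↦ ?_
  fin_cases i <;> fin_cases j <;> simp [elt]

theorem smul_elt {c : W} (hc : φ c = c) (a b : W) : c • elt a b = elt (c * a) (c * b) := by
  refine Matrix.ext fun i j ↦ ?_
  fin_cases i <;> fin_cases j <;> simp [elt, hc]; ring

theorem elt_mem_O₂ (a b : W) : elt a b ∈ O₂ := by
  have hS : elt b 0 * elt 0 1 = elt 0 b := by simp [elt_mul]
  rw [← add_zero a, ← zero_add b, ← elt_add, ← hS]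
  exact add_mem (Subring.subset_closure (.inl ⟨a, rfl⟩)) <| mul_mem
    (Subring.subset_closure (.inl ⟨b, rfl⟩)) (Subring.subset_closure (.inr rfl))

theorem elt_one_pow_three {ω : W} (hω : ω * φ ω = -1) : elt 1 ω ^ 3 = elt (-8) 0 := by
  have hsq : elt 1 ω ^ 2 = elt (-2) (2 * ω) := by
    rw [sq, elt_mul, map_one]
    exact congrArg₂ elt (by linear_combination 3 * hω) (by ring)
  rw [pow_succ, hsq, elt_mul, map_one]
  exact congrArg₂ elt (by linear_combination 6 * hω) (by ring)

/-- with `ω` the Teichmüller lift of a primitive eighth root of unity in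
`F₉`, the element `s = -(1/2)(1 + ωS)` of `O₂` satisfies `s³ = 1` and `s ≠ 1`, i.e. `s`
has order exactly `3` in the unit group of `O₂`. -/
theorem s_has_order_three (x : GaloisField 3 2) (hx : orderOf x = 8)
    (half : W) (h2 : 2 * half = 1) :
    sElt x half ∈ O₂ ∧ sElt x half ^ 3 = 1 ∧ sElt x half ≠ 1 ∧
      orderOf (sElt x half) = 3 := by
  have hhalf : φ (-half) = -half := by
    have h2' : φ half * 2 = 1 := by rw [← map_ofNat φ 2, ← map_mul, mul_comm, h2, map_one]
    rw [map_neg, left_inv_eq_right_inv h2' h2]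
  have hs : sElt x half = (-half) • elt 1 (teichmuller 3 x) := by
    rw [sElt, ← elt_one_zero, elt_add, add_zero, zero_add]
  have hcube : sElt x half ^ 3 = 1 := by
    rw [hs, smul_pow, elt_one_pow_three (teichmuller_mul_frobenius_teichmuller hx),
      smul_elt (by rw [map_pow, hhalf]), ← elt_one_zero]
    exact congrArg₂ elt (by linear_combination (4 * half ^ 2 + 2 * half + 1) * h2) (mul_zero _)
  have hne : sElt x half ≠ 1 := by
    intro h
    have h00 : -half = 1 := by simpa [hs, smul_elt hhalf, elt] using congrFun (congrFun h 0) 0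
    have h3 : (3 : W) ≠ 0 := by exact_mod_cast p_nonzero 3 (GaloisField 3 2)
    exact h3 (by linear_combination -2 * h00 - h2)
  refine ⟨?_, hcube, hne, orderOf_eq_prime hcube hne⟩
  rw [hs, smul_elt hhalf]
  exact elt_mem_O₂ _ _

end
end

section
/- With s = -(1/2)(1 + ωS) ∈ O_2^× as above, the conjugation relation ω² s ω^{-2} = s² holds (equivalently ω² s ω⁶ = s², since ω⁸ = 1). Consequently s and ω² generate a subgroup of O_2^× of order 12 isomorphic to the nontrivial semidirect product C_3 ⋊ C_4. -/
noncomputable section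

open WittVector

/-- Inversion as an automorphism of the cyclic group of order 3. -/
def invAut : MulAut (Multiplicative (ZMod 3)) := MulEquiv.inv (Multiplicative (ZMod 3))

/-- The action of `C₄` on `C₃` in which a generator acts by inversion. -/
def theta : Multiplicative (ZMod 4) →* MulAut (Multiplicative (ZMod 3)) where
  toFun k := invAut ^ (Multiplicative.toAdd k).val
  map_one' := by
    show invAut ^ (Multiplicative.toAdd (1 : Multiplicative (ZMod 4))).val = 1
    simp
  map_mul' := fun a b => by
    show invAut ^ _ = invAut ^ _ * invAut ^ _
    have h2 : invAut ^ 2 = 1 := by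
      rw [sq]
      ext x
      exact inv_inv x
    have h4 : invAut ^ 4 = 1 := by
      rw [show (4 : ℕ) = 2 * 2 from rfl, pow_mul, h2, one_pow]
    simp only [toAdd_mul, ZMod.val_add]
    rw [← pow_add, eq_comm, pow_eq_pow_mod _ h4]

/-- The nontrivial semidirect product `C₃ ⋊ C₄`. -/
abbrev C3C4 := (Multiplicative (ZMod 3)) ⋊[theta] (Multiplicative (ZMod 4))

/-! In `O₂` the element `N = ωS` satisfies `N² = ω φ(ω) S² = 3ω⁴ = -3`, so `s = -(1 + N)/2` is a
primitive cube root of unity. Conjugation by `ω²` fixes scalars and negates `N`, because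
`φ(ω²) = ω⁶ = -ω²`; hence it sends `s` to `-(1 - N)/2 = s²`. So `s` of order `3` and `ω²` of order
`4` satisfy the defining relation of `C₃ ⋊ C₄`, and the induced map `C₃ ⋊ C₄ → ⟨s, ω²⟩` is injective
because `⟨s⟩ ∩ ⟨ω²⟩ = 1` by coprimality of the orders. -/

open Subgroup

section Group

variable {G : Type*} [Group G]

def zmodHomOfOrderOf (a : G) {n : ℕ} (h : orderOf a = n) : Multiplicative (ZMod n) →* G :=
  (zpowers a).subtype.comp (zmodMulEquivOfGenerator (g := ⟨a, mem_zpowers a⟩)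
    (fun ⟨_, k, hk⟩ => ⟨k, Subtype.ext (by simp [← hk])⟩)
    (by rw [Nat.card_zpowers, h])).toMonoidHom

section zmodHomOfOrderOf

variable (a : G) {n : ℕ} (h : orderOf a = n)

@[simp]
lemma zmodHomOfOrderOf_ofAdd_one : zmodHomOfOrderOf a h (.ofAdd 1) = a := by
  simp [zmodHomOfOrderOf]

lemma zmodHomOfOrderOf_mem_zpowers (k : Multiplicative (ZMod n)) :
    zmodHomOfOrderOf a h k ∈ zpowers a :=
  Subtype.prop _

lemma zmodHomOfOrderOf_injective : Function.Injective (zmodHomOfOrderOf a h) :=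
  Subtype.val_injective.comp (MulEquiv.injective _)

end zmodHomOfOrderOf

lemma Multiplicative.ofAdd_one_pow_val {n : ℕ} [NeZero n] (g : Multiplicative (ZMod n)) :
    .ofAdd 1 ^ g.toAdd.val = g := by
  rw [← ofAdd_nsmul, nsmul_one, ZMod.natCast_zmod_val, ofAdd_toAdd]

lemma theta_ofAdd_one : theta (.ofAdd 1) = invAut := pow_one _

lemma conj_eq_inv_of_mem_zpowers {a b x : G} (hba : b * a * b⁻¹ = a⁻¹) (hx : x ∈ zpowers a) :
    b * x * b⁻¹ = x⁻¹ := by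
  obtain ⟨k, rfl⟩ := hx
  simpa [MulAut.conj_apply, inv_zpow] using congrArg (· ^ k) hba

namespace C3C4

variable {a b : G} (ha : orderOf a = 3) (hb : orderOf b = 4) (hba : b * a * b⁻¹ = a⁻¹)

lemma card : Nat.card C3C4 = 12 := by
  simp [SemidirectProduct.card, Nat.card_eq_fintype_card]

include hba in
lemma apply_invAut_pow {f : Multiplicative (ZMod 3) →* G} (hf : ∀ n, f n ∈ zpowers a) (k : ℕ)
    (n : Multiplicative (ZMod 3)) : f ((invAut ^ k) n) = (MulAut.conj b ^ k) (f n) := by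
  induction k generalizing n with
  | zero => rfl
  | succ k ih =>
    have hinv : f (invAut n) = MulAut.conj b (f n) :=
      (map_inv f n).trans (conj_eq_inv_of_mem_zpowers hba (hf n)).symm
    rw [pow_succ, pow_succ, MulAut.mul_apply, MulAut.mul_apply, ih, hinv]

include hba in
def lift : C3C4 →* G :=
  SemidirectProduct.lift (zmodHomOfOrderOf a ha) (zmodHomOfOrderOf b hb) fun g => by
    refine MonoidHom.ext fun n => ?_
    rw [← Multiplicative.ofAdd_one_pow_val g, map_pow, theta_ofAdd_one]
    simp only [MonoidHom.comp_apply, MulEquiv.coe_toMonoidHom, map_pow,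
      zmodHomOfOrderOf_ofAdd_one]
    exact apply_invAut_pow hba (zmodHomOfOrderOf_mem_zpowers a ha) _ n

lemma lift_apply (z : C3C4) :
    lift ha hb hba z = zmodHomOfOrderOf a ha z.left * zmodHomOfOrderOf b hb z.right :=
  rfl

lemma lift_injective : Function.Injective (lift ha hb hba) := by
  rw [injective_iff_map_eq_one]
  intro z hz
  rw [lift_apply] at hz
  have hdisj : Disjoint (zpowers a) (zpowers b) :=
    disjoint_of_coprime_natCard (by rw [Nat.card_zpowers, Nat.card_zpowers, ha, hb]; decide)
  have hright : zmodHomOfOrderOf b hb z.right = 1 := by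
    refine disjoint_def.mp hdisj ?_ (zmodHomOfOrderOf_mem_zpowers b hb _)
    rw [eq_inv_of_mul_eq_one_right hz]
    exact inv_mem (zmodHomOfOrderOf_mem_zpowers a ha _)
  rw [hright, mul_one] at hz
  rw [map_eq_one_iff _ (zmodHomOfOrderOf_injective b hb)] at hright
  rw [map_eq_one_iff _ (zmodHomOfOrderOf_injective a ha)] at hz
  exact SemidirectProduct.ext hz hright

lemma range_lift : (lift ha hb hba).range = closure {a, b} := by
  refine le_antisymm ?_ (closure_le _ |>.mpr ?_)
  · rintro _ ⟨z, rfl⟩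
    rw [lift_apply]
    exact mul_mem
      (zpowers_le.mpr (subset_closure (by simp)) (zmodHomOfOrderOf_mem_zpowers a ha _))
      (zpowers_le.mpr (subset_closure (by simp)) (zmodHomOfOrderOf_mem_zpowers b hb _))
  · rintro _ (rfl | rfl)
    · exact ⟨.inl (.ofAdd 1), by simp [lift]⟩
    · exact ⟨.inr (.ofAdd 1), by simp [lift]⟩

def mulEquivClosure : C3C4 ≃* closure {a, b} :=
  (MonoidHom.ofInjective (lift_injective ha hb hba)).trans
    (MulEquiv.subgroupCongr (range_lift ha hb hba))

lemma card_closure_eq_and_nonempty_mulEquiv (ha3 : a ^ 3 = 1) (ha1 : a ≠ 1) (hb4 : b ^ 4 = 1)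
    (hb2 : b ^ 2 ≠ 1) (hba : b * a = a ^ 2 * b) :
    Nat.card (closure {a, b}) = 12 ∧ Nonempty (closure {a, b} ≃* C3C4) := by
  have ha : orderOf a = 3 := orderOf_eq_prime ha3 ha1
  have hb : orderOf b = 4 := orderOf_eq_prime_pow (p := 2) (n := 1) hb2 hb4
  have hinv : b * a * b⁻¹ = a⁻¹ := by
    rw [hba, mul_inv_cancel_right]
    exact eq_inv_of_mul_eq_one_left (by rw [← pow_succ, ha3])
  let e := mulEquivClosure ha hb hinv
  exact ⟨by rw [← Nat.card_congr e.toEquiv, card], ⟨e.symm⟩⟩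

end C3C4

end Group

section CubeRootOfUnity

variable {R A : Type*} [CommRing R] [Ring A] [Algebra R A] {r : R} {N : A}

lemma mul_self_eq_smul_one_of_sq (hN : N ^ 2 = -3) : N * N = (-3 : R) • 1 := by
  rw [← sq, hN, neg_smul, ← Algebra.algebraMap_eq_smul_one, map_ofNat]

lemma neg_smul_one_add_sq (hr : 2 * r = 1) (hN : N ^ 2 = -3) :
    ((-r) • (1 + N)) ^ 2 = r • (N - 1) := by
  rw [sq, smul_mul_smul_comm, add_mul, mul_add, mul_add, mul_self_eq_smul_one_of_sq (R := R) hN]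
  simp only [one_mul, mul_one]
  linear_combination (norm := module) hr • (r • (N - 1))

lemma neg_smul_one_add_pow_three (hr : 2 * r = 1) (hN : N ^ 2 = -3) :
    ((-r) • (1 + N)) ^ 3 = 1 := by
  rw [pow_succ', neg_smul_one_add_sq hr hN, smul_mul_smul_comm, add_mul, mul_sub, mul_sub,
    mul_self_eq_smul_one_of_sq (R := R) hN]
  simp only [one_mul, mul_one]
  linear_combination (norm := module) hr • ((2 * r + 1) • (1 : A))

lemma neg_smul_one_add_ne_one (hr : 2 * r = 1) (hN : N ^ 2 = -3) (h3 : (3 : A) ≠ 0) :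
    (-r) • (1 + N) ≠ 1 := by
  intro h
  have h2 := neg_smul_one_add_sq hr hN
  rw [h, one_pow] at h2
  have h3' : (3 : R) • (1 : A) = 0 := by
    linear_combination (norm := module) h2 - h - hr • (1 : A)
  exact h3 (by rwa [← Algebra.algebraMap_eq_smul_one, map_ofNat] at h3')

lemma mul_neg_smul_one_add_eq_sq_mul {d : A} (hr : 2 * r = 1) (hN : N ^ 2 = -3)
    (hdN : d * N = -(N * d)) :
    d * (-r) • (1 + N) = ((-r) • (1 + N)) ^ 2 * d := by
  rw [neg_smul_one_add_sq hr hN, mul_smul_comm, smul_mul_assoc, mul_add, hdN, sub_mul, mul_one,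
    one_mul]
  module

end CubeRootOfUnity

namespace WittVector

variable {p : ℕ} [Fact p.Prime] {R : Type*} [CommRing R] [CharP R p]

lemma frobenius_teichmuller_s6 (r : R) : frobenius (teichmuller p r) = teichmuller p r ^ p := by
  rw [frobenius_eq_map_frobenius, map_teichmuller, ← map_pow, frobenius_def]

lemma neg_one_ne_one [Fact (2 < p)] : (-1 : WittVector p R) ≠ 1 := fun h =>
  CharP.neg_one_ne_one R p (by simpa only [map_neg, map_one] using congrArg constantCoeff h)

lemma teichmuller_neg_one_s6 [IsDomain R] [Fact (2 < p)] : teichmuller p (-1 : R) = -1 := by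
  have hsq : teichmuller p (-1 : R) * teichmuller p (-1) = 1 := by
    rw [← map_mul, neg_one_mul, neg_neg, map_one]
  refine (mul_self_eq_one_iff.mp hsq).resolve_left fun h => CharP.neg_one_ne_one R p ?_
  simpa [teichmuller_coeff_zero] using congrArg constantCoeff h

end WittVector

section O2

variable {x : GaloisField 3 2}

lemma GaloisField.pow_four_eq_neg_one (hx : orderOf x = 8) : x ^ 4 = -1 := by
  have hsq : x ^ 4 * x ^ 4 = 1 := by
    rw [← pow_add, show 4 + 4 = orderOf x from hx.symm, pow_orderOf_eq_one]
  refine (mul_self_eq_one_iff.mp hsq).resolve_left fun h => ?_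
  have := orderOf_dvd_of_pow_eq_one h
  rw [hx] at this
  norm_num at this

lemma teichmuller_pow_four_eq_neg_one (hx : orderOf x = 8) : teichmuller 3 x ^ 4 = -1 := by
  have : Fact (2 < 3) := ⟨by norm_num⟩
  rw [← map_pow, GaloisField.pow_four_eq_neg_one hx, teichmuller_neg_one_s6]


lemma elt_teichmuller_zero :
    elt (teichmuller 3 x) 0 = !![teichmuller 3 x, 0; 0, teichmuller 3 x ^ 3] := by
  simp [elt, φ, frobenius_teichmuller_s6]

lemma elt_zero_teichmuller :
    elt 0 (teichmuller 3 x) = !![0, 3 * teichmuller 3 x; teichmuller 3 x ^ 3, 0] := by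
  simp [elt, φ, frobenius_teichmuller_s6]

variable (hx : orderOf x = 8)
include hx

lemma elt_zero_teichmuller_sq : elt 0 (teichmuller 3 x) ^ 2 = -3 := by
  have ht := teichmuller_pow_four_eq_neg_one hx
  rw [elt_zero_teichmuller, sq, Matrix.mul_fin_two]
  ext i j : 1
  fin_cases i <;> fin_cases j <;> simp [Matrix.ofNat_apply] <;> linear_combination 3 * ht

lemma elt_teichmuller_zero_pow_four : elt (teichmuller 3 x) 0 ^ 4 = -1 := by
  have ht := teichmuller_pow_four_eq_neg_one hx
  set t := teichmuller 3 x
  rw [elt_teichmuller_zero]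
  ext i j : 1
  fin_cases i <;> fin_cases j <;> simp [pow_succ]
  · linear_combination ht
  · linear_combination (t ^ 8 - t ^ 4 + 1) * ht

lemma elt_teichmuller_zero_sq_mul_elt_zero_teichmuller :
    elt (teichmuller 3 x) 0 ^ 2 * elt 0 (teichmuller 3 x) =
      -(elt 0 (teichmuller 3 x) * elt (teichmuller 3 x) 0 ^ 2) := by
  have ht := teichmuller_pow_four_eq_neg_one hx
  set t := teichmuller 3 x
  rw [elt_teichmuller_zero, elt_zero_teichmuller]
  ext i j : 1
  fin_cases i <;> fin_cases j <;> simp [sq]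
  · linear_combination 3 * t ^ 3 * ht
  · linear_combination t ^ 5 * ht

end O2

lemma three_ne_zero_matrix : (3 : Matrix (Fin 2) (Fin 2) W) ≠ 0 := fun h =>
  WittVector.p_nonzero (p := 3) (R := GaloisField 3 2)
    (by simpa [Matrix.ofNat_apply] using congr_fun₂ h 0 0)

lemma neg_one_ne_one_matrix : (-1 : Matrix (Fin 2) (Fin 2) W) ≠ 1 := fun h =>
  have : Fact (2 < 3) := ⟨by norm_num⟩
  WittVector.neg_one_ne_one (p := 3) (by simpa using congr_fun₂ h 0 0)

/-- with `s = -(1/2)(1 + ωS)` and `ω` the Teichmüller lift of a primitive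
eighth root of unity, the relation `ω²sω⁶ = s²` holds (equivalently `ω²sω⁻² = s²`,
since `ω⁸ = 1`); consequently `s` and `ω²` generate a subgroup of `O₂ˣ` of order `12`
isomorphic to the nontrivial semidirect product `C₃ ⋊ C₄`. -/
theorem omega_conj_s (x : GaloisField 3 2) (hx : orderOf x = 8)
    (half : W) (h2 : 2 * half = 1) :
    (elt (teichmuller 3 x) 0) ^ 2 * sElt x half * (elt (teichmuller 3 x) 0) ^ 6
        = sElt x half ^ 2 ∧
    ∀ us uω : (Matrix (Fin 2) (Fin 2) W)ˣ,
      (us : Matrix (Fin 2) (Fin 2) W) = sElt x half →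
      (uω : Matrix (Fin 2) (Fin 2) W) = elt (teichmuller 3 x) 0 →
      Nat.card ↥(Subgroup.closure {us, uω ^ 2}) = 12 ∧
        Nonempty (↥(Subgroup.closure {us, uω ^ 2}) ≃* C3C4) := by
  have hN := elt_zero_teichmuller_sq hx
  have hω4 := elt_teichmuller_zero_pow_four hx
  have hω8 : elt (teichmuller 3 x) 0 ^ 8 = 1 := by
    rw [show 8 = 4 * 2 by rfl, pow_mul, hω4, neg_one_sq]
  have hs3 : sElt x half ^ 3 = 1 := neg_smul_one_add_pow_three h2 hN
  have hs1 : sElt x half ≠ 1 := neg_smul_one_add_ne_one h2 hN three_ne_zero_matrix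
  have hconj : elt (teichmuller 3 x) 0 ^ 2 * sElt x half =
      sElt x half ^ 2 * elt (teichmuller 3 x) 0 ^ 2 :=
    mul_neg_smul_one_add_eq_sq_mul h2 hN (elt_teichmuller_zero_sq_mul_elt_zero_teichmuller hx)
  refine ⟨by rw [hconj, mul_assoc, ← pow_add, hω8, mul_one], fun us uω hus huω => ?_⟩
  have hω (n : ℕ) : ((uω ^ n : (Matrix (Fin 2) (Fin 2) W)ˣ) : Matrix (Fin 2) (Fin 2) W) =
      elt (teichmuller 3 x) 0 ^ n := by
    rw [Units.val_pow_eq_pow_val, huω]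
  refine C3C4.card_closure_eq_and_nonempty_mulEquiv ?_ ?_ ?_ ?_ ?_ <;>
    simp only [← pow_mul, Nat.reduceMul, ne_eq, ← Units.val_inj, Units.val_pow_eq_pow_val,
      Units.val_mul, Units.val_one, hus, hω]
  · exact hs3
  · exact hs1
  · exact hω8
  · rw [hω4]; exact neg_one_ne_one_matrix
  · rw [hconj]

end
end

section
/- In the group G_24 generated by elements s, t, ψ satisfying s³ = 1, t⁴ = 1, tst^{-1} = s², ψs = sψ, tψ = ψt³, ψ² = t², the subgroup generated by t and ψ is isomorphic to the quaternion group Q_8 of order 8, and it is a 2-Sylow subgroup of G_24. Moreover G_24 has order 24. -/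
/-!
`G₂₄` is the dicyclic group `QuaternionGroup 6`: the element `x = sψ` satisfies `x¹² = 1`,
`t² = x⁶` and `t x t⁻¹ = x⁻¹`, and it recovers `s = x⁴` and `ψ = x⁹`, so `a 1 ↦ x`, `xa 0 ↦ t`
is a surjection onto `G₂₄`, inverted by `s, t, ψ ↦ a 4, xa 0, a 9`. Inside `G₂₄`, the elements
`ψ` and `t` satisfy the defining relations of `Q₈ = QuaternionGroup 2`, and the resulting map
`Q₈ → G₂₄` is injective since `ψ² ≠ 1`. A subgroup of order `8` in a group of order `24` has
odd index, hence is a Sylow `2`-subgroup.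
-/

noncomputable section

/-- The group `G₂₄`, presented with generators `s, t, ψ` (encoded as `0, 1, 2`) and
relations `s³ = 1`, `t⁴ = 1`, `tst⁻¹ = s²`, `ψs = sψ`, `tψ = ψt³`, `ψ² = t²`. -/
def G24rels : Set (FreeGroup (Fin 3)) :=
  { FreeGroup.of 0 ^ 3, FreeGroup.of 1 ^ 4,
    FreeGroup.of 1 * FreeGroup.of 0 * (FreeGroup.of 1)⁻¹ * (FreeGroup.of 0 ^ 2)⁻¹,
    FreeGroup.of 2 * FreeGroup.of 0 * (FreeGroup.of 0 * FreeGroup.of 2)⁻¹,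
    FreeGroup.of 1 * FreeGroup.of 2 * (FreeGroup.of 2 * FreeGroup.of 1 ^ 3)⁻¹,
    FreeGroup.of 2 ^ 2 * (FreeGroup.of 1 ^ 2)⁻¹ }

/-- The group `G₂₄` as a presented group. -/
abbrev G24 := PresentedGroup G24rels

section ZModPow

variable {G : Type*} [Group G] {m : ℕ}

def zmodPow (x : G) (hx : x ^ m = 1) (i : ZMod m) : G :=
  (ZMod.lift m ⟨zmultiplesHom (Additive G) (.ofMul x), by simp [← ofMul_pow, hx]⟩ i).toMul

theorem zmodPow_intCast {x : G} (hx : x ^ m = 1) (k : ℤ) : zmodPow x hx k = x ^ k := by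
  simp [zmodPow, ZMod.lift_coe]

end ZModPow

namespace QuaternionGroup

variable {G : Type*} [Group G] {n : ℕ}

theorem inv_a (i : ZMod (2 * n)) : (a i)⁻¹ = a (-i) :=
  inv_eq_of_mul_eq_one_right (by rw [a_mul_a, add_neg_cancel, a_zero])

theorem a_one_zpow (k : ℤ) : (a 1 : QuaternionGroup n) ^ k = a k := by
  cases k with
  | ofNat m => simp [a_one_pow]
  | negSucc m => rw [zpow_negSucc, a_one_pow, inv_a, Int.cast_negSucc]

theorem closure_a_one_xa_zero : Subgroup.closure {(a 1 : QuaternionGroup n), xa 0} = ⊤ := by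
  set H := Subgroup.closure {(a 1 : QuaternionGroup n), xa 0}
  have ha : ∀ i, a i ∈ H := fun i => by
    obtain ⟨k, rfl⟩ := ZMod.intCast_surjective i
    rw [← a_one_zpow]
    exact H.zpow_mem (Subgroup.subset_closure (Set.mem_insert _ _)) k
  refine H.eq_top_iff' |>.2 ?_
  rintro (i | i)
  · exact ha i
  · simpa using H.mul_mem (Subgroup.subset_closure (Set.mem_insert_of_mem _ rfl)) (ha i)

theorem hom_ext {f g : QuaternionGroup n →* G} (ha : f (a 1) = g (a 1))
    (hxa : f (xa 0) = g (xa 0)) : f = g :=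
  MonoidHom.eq_of_eqOn_dense closure_a_one_xa_zero (by rintro _ (rfl | rfl) <;> assumption)

theorem injective_of_map_a_two_ne_one {f : QuaternionGroup 2 →* G} (hf : f (a 2) ≠ 1) :
    Function.Injective f := by
  -- `a 2 = -1` is the only involution of `Q₈`, and every other nontrivial element squares to it.
  have key : ∀ g : QuaternionGroup 2, g ≠ 1 → g = a 2 ∨ g ^ 2 = a 2 := by decide
  refine (injective_iff_map_eq_one f).2 fun g hg => by_contra fun hne => hf ?_
  rcases key g hne with rfl | hsq
  · exact hg
  · rw [← hsq, map_pow, hg, one_pow]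

variable {x y : G}

def lift (hx : x ^ (2 * n) = 1) (hy : y ^ 2 = x ^ n) (hyx : y * x = x⁻¹ * y) :
    QuaternionGroup n →* G where
  toFun
    | a i => zmodPow x hx i
    | xa i => y * zmodPow x hx i
  map_one' := by
    show zmodPow x hx 0 = 1
    simpa using zmodPow_intCast hx 0
  map_mul' := by
    have conj (k : ℤ) : x ^ k * y = y * x ^ (-k) := by
      simpa [inv_zpow'] using (SemiconjBy.zpow_right hyx (-k)).symm
    have hyy : y * y = x ^ (n : ℤ) := by rw [← sq, hy, zpow_natCast]
    rintro (i | i) (j | j)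
    all_goals
      obtain ⟨k, rfl⟩ := ZMod.intCast_surjective i
      obtain ⟨l, rfl⟩ := ZMod.intCast_surjective j
    · simp only [a_mul_a, ← Int.cast_add, zmodPow_intCast, zpow_add]
    · simp only [a_mul_xa, ← Int.cast_sub, zmodPow_intCast]
      rw [← mul_assoc, conj, mul_assoc, ← zpow_add, neg_add_eq_sub]
    · simp only [xa_mul_a, ← Int.cast_add, zmodPow_intCast, zpow_add, mul_assoc]
    · rw [xa_mul_xa, show (n : ZMod (2 * n)) + l - k = ((n + l - k : ℤ) : ZMod (2 * n)) by
        push_cast; ring]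
      simp only [zmodPow_intCast]
      rw [mul_assoc y, ← mul_assoc (x ^ k), conj, ← mul_assoc, ← mul_assoc, hyy, ← zpow_add,
        ← zpow_add]
      ring_nf

variable {hx : x ^ (2 * n) = 1} {hy : y ^ 2 = x ^ n} {hyx : y * x = x⁻¹ * y}

@[simp]
theorem lift_a_one : lift hx hy hyx (a 1) = x := by
  show zmodPow x hx 1 = x
  simpa using zmodPow_intCast hx 1

@[simp]
theorem lift_xa_zero : lift hx hy hyx (xa 0) = y := by
  show y * zmodPow x hx 0 = y
  simpa using zmodPow_intCast hx 0

theorem range_lift : (lift hx hy hyx).range = Subgroup.closure {x, y} := by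
  rw [MonoidHom.range_eq_map, ← closure_a_one_xa_zero, MonoidHom.map_closure, Set.image_pair,
    lift_a_one, lift_xa_zero]

end QuaternionGroup

namespace G24

open QuaternionGroup

abbrev s : G24 := PresentedGroup.of 0
abbrev t : G24 := PresentedGroup.of 1
abbrev ψ : G24 := PresentedGroup.of 2

theorem s_pow_three : s ^ 3 = 1 := by
  have h := PresentedGroup.one_of_mem (rels := G24rels) (Or.inl rfl)
  simp only [map_pow] at h
  exact h

theorem t_pow_four : t ^ 4 = 1 := by
  have h := PresentedGroup.one_of_mem (rels := G24rels) (Or.inr <| Or.inl rfl)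
  simp only [map_pow] at h
  exact h

theorem t_mul_s_mul_t_inv : t * s * t⁻¹ = s ^ 2 := by
  have h := PresentedGroup.one_of_mem (rels := G24rels) (Or.inr <| Or.inr <| Or.inl rfl)
  simp only [map_mul, map_pow, map_inv, mul_inv_eq_one] at h
  exact h

theorem ψ_mul_s : ψ * s = s * ψ := by
  have h := PresentedGroup.one_of_mem (rels := G24rels) (Or.inr <| Or.inr <| Or.inr <| Or.inl rfl)
  simp only [map_mul, map_inv, mul_inv_eq_one] at h
  exact h

theorem t_mul_ψ : t * ψ = ψ * t ^ 3 := by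
  have h := PresentedGroup.one_of_mem (rels := G24rels)
    (Or.inr <| Or.inr <| Or.inr <| Or.inr <| Or.inl rfl)
  simp only [map_mul, map_pow, map_inv, mul_inv_eq_one] at h
  exact h

theorem ψ_sq : ψ ^ 2 = t ^ 2 := by
  have h := PresentedGroup.one_of_mem (rels := G24rels)
    (Or.inr <| Or.inr <| Or.inr <| Or.inr <| Or.inr rfl)
  simp only [map_mul, map_pow, map_inv, mul_inv_eq_one] at h
  exact h

theorem ψ_pow_four : ψ ^ 4 = 1 := by
  rw [show ψ ^ 4 = (ψ ^ 2) ^ 2 by group, ψ_sq, ← pow_mul, t_pow_four]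

theorem t_mul_ψ_eq_ψ_inv_mul_t : t * ψ = ψ⁻¹ * t :=
  calc t * ψ = ψ⁻¹ * ψ ^ 2 * t ^ 3 := by rw [t_mul_ψ]; group
    _ = ψ⁻¹ * t ^ 4 * t := by rw [ψ_sq]; group
    _ = ψ⁻¹ * t := by rw [t_pow_four, mul_one]

theorem t_mul_s_eq_s_inv_mul_t : t * s = s⁻¹ * t :=
  calc t * s = t * s * t⁻¹ * t := by group
    _ = s⁻¹ * s ^ 3 * t := by rw [t_mul_s_mul_t_inv]; group
    _ = s⁻¹ * t := by rw [s_pow_three, mul_one]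

theorem commute_s_ψ : Commute s ψ := ψ_mul_s.symm

theorem s_mul_ψ_pow (k : ℕ) : (s * ψ) ^ k = s ^ (k % 3) * ψ ^ (k % 4) := by
  rw [commute_s_ψ.mul_pow, pow_eq_pow_mod k s_pow_three, pow_eq_pow_mod k ψ_pow_four]

theorem s_mul_ψ_pow_twelve : (s * ψ) ^ (2 * 6) = 1 := by
  simp [s_mul_ψ_pow]

theorem t_sq_eq_s_mul_ψ_pow_six : t ^ 2 = (s * ψ) ^ 6 := by
  simp [s_mul_ψ_pow, ψ_sq]

theorem t_mul_s_mul_ψ : t * (s * ψ) = (s * ψ)⁻¹ * t := by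
  rw [← mul_assoc, t_mul_s_eq_s_inv_mul_t, mul_assoc, t_mul_ψ_eq_ψ_inv_mul_t, ← mul_assoc,
    ← mul_inv_rev, commute_s_ψ.eq]

def ofQuaternionGroupSix : QuaternionGroup 6 →* G24 :=
  lift s_mul_ψ_pow_twelve t_sq_eq_s_mul_ψ_pow_six t_mul_s_mul_ψ

def toQuaternionGroupSix : G24 →* QuaternionGroup 6 :=
  PresentedGroup.toGroup (f := ![a 4, xa 0, a 9]) <| by
    rintro r (rfl | rfl | rfl | rfl | rfl | rfl) <;> decide

theorem ofQuaternionGroupSix_a (k : ℕ) : ofQuaternionGroupSix (a k) = (s * ψ) ^ k := by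
  rw [← a_one_pow, map_pow, ofQuaternionGroupSix, lift_a_one]

def mulEquivQuaternionGroupSix : G24 ≃* QuaternionGroup 6 :=
  toQuaternionGroupSix.toMulEquiv ofQuaternionGroupSix
    (PresentedGroup.ext fun i => by
      fin_cases i
      · exact (ofQuaternionGroupSix_a 4).trans (by simp [s_mul_ψ_pow])
      · simp [ofQuaternionGroupSix, toQuaternionGroupSix]
      · exact (ofQuaternionGroupSix_a 9).trans (by simp [s_mul_ψ_pow]))
    (hom_ext (by simp [ofQuaternionGroupSix, toQuaternionGroupSix]; decide)
      (by simp [ofQuaternionGroupSix, toQuaternionGroupSix]))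

theorem card : Nat.card G24 = 24 := by
  rw [Nat.card_congr mulEquivQuaternionGroupSix.toEquiv, Nat.card_eq_fintype_card,
    QuaternionGroup.card]

theorem ψ_sq_ne_one : ψ ^ 2 ≠ 1 := by
  intro h
  have h6 : (a 9 : QuaternionGroup 6) ^ 2 = 1 := by
    simpa [toQuaternionGroupSix] using congrArg toQuaternionGroupSix h
  exact absurd h6 (by decide)

def ofQuaternionGroupTwo : QuaternionGroup 2 →* G24 :=
  lift (n := 2) ψ_pow_four ψ_sq.symm t_mul_ψ_eq_ψ_inv_mul_t

theorem ofQuaternionGroupTwo_injective : Function.Injective ofQuaternionGroupTwo := by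
  refine injective_of_map_a_two_ne_one ?_
  rw [show (a 2 : QuaternionGroup 2) = a 1 ^ 2 by decide, map_pow, ofQuaternionGroupTwo,
    lift_a_one]
  exact ψ_sq_ne_one

theorem range_ofQuaternionGroupTwo : ofQuaternionGroupTwo.range = Subgroup.closure {t, ψ} := by
  rw [Set.pair_comm]
  exact range_lift

def closureMulEquivQuaternionGroupTwo : Subgroup.closure {t, ψ} ≃* QuaternionGroup 2 :=
  (MulEquiv.subgroupCongr range_ofQuaternionGroupTwo.symm).trans
    (MonoidHom.ofInjective ofQuaternionGroupTwo_injective).symm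

theorem card_closure_t_ψ : Nat.card (Subgroup.closure {t, ψ}) = 8 := by
  rw [Nat.card_congr closureMulEquivQuaternionGroupTwo.toEquiv, Nat.card_eq_fintype_card,
    QuaternionGroup.card]

end G24

/-- in `G₂₄`, the subgroup generated by `t` and `ψ` is isomorphic to the
quaternion group `Q₈` of order 8 and is a 2-Sylow subgroup of `G₂₄`; moreover `G₂₄` has
order 24. -/
theorem G24_sylow_two_quaternion :
    Nat.card G24 = 24 ∧
      Nat.card ↥(Subgroup.closure {PresentedGroup.of (rels := G24rels) 1,
        PresentedGroup.of 2}) = 8 ∧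
      Nonempty (↥(Subgroup.closure {PresentedGroup.of (rels := G24rels) 1,
        PresentedGroup.of 2}) ≃* QuaternionGroup 2) ∧
      ∃ P : Sylow 2 G24, (P : Subgroup G24) =
        Subgroup.closure {PresentedGroup.of (rels := G24rels) 1, PresentedGroup.of 2} := by
  have hindex := (Subgroup.closure {G24.t, G24.ψ}).index_mul_card
  rw [G24.card_closure_t_ψ, G24.card] at hindex
  refine ⟨G24.card, G24.card_closure_t_ψ, ⟨G24.closureMulEquivQuaternionGroupTwo⟩,
    IsPGroup.toSylow (IsPGroup.of_card (n := 3) G24.card_closure_t_ψ) (by omega), rfl⟩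

end
end
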